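/- Let b, b₂, b₃ > 0 and b₁ > b₃, and define F(x) = b₁·exp(−b x²)/(1 + b₂·erf(√b·x)) − b₃·F1(x) for x ≥ 0, where F1(x) = exp(-x²)/erfc(x). Then the equation F(x) = x has a unique solution λ > 0. -/

import Mathlib

/-!
On `[0, ∞)` the map `F` is continuous and antitone. The Gaussian factor `exp (-(b x²))` decreases
while `1 + b₂ erf (√b x)` increases, and `F1 x = exp (-x²) / erfc x` increases because its
derivative has the sign of `2/√π · exp (-x²) - 2x erfc x`, which is nonnegative by the Mills-ratio
bound `∫ₓ^∞ exp (-u²) du ≤ exp (-x²) / (2x)`. A continuous antitone map with `F 0 = b₁ - b₃ > 0`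
meets the diagonal exactly once in `(0, ∞)`: the intermediate value theorem applied to `F x - x`
on `[0, F 0]` gives a crossing, and two fixed points `p ≤ q` force `q = F q ≤ F p = p`.
-/

open Real Filter Topology Set

noncomputable def erf (x : ℝ) : ℝ := (2 / Real.sqrt Real.pi) * ∫ u in (0:ℝ)..x, Real.exp (-u^2)

noncomputable def erfc (x : ℝ) : ℝ := 1 - erf x

open MeasureTheory

lemma integrable_exp_neg_sq : Integrable fun u : ℝ => exp (-u ^ 2) := by
  simpa using integrable_exp_neg_mul_sq one_pos

lemma hasDerivAt_erf (x : ℝ) : HasDerivAt erf (2 / √π * exp (-x ^ 2)) x :=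
  ((Continuous.integral_hasStrictDerivAt (by fun_prop) 0 x).hasDerivAt).const_mul _

lemma hasDerivAt_erfc (x : ℝ) : HasDerivAt erfc (-(2 / √π * exp (-x ^ 2))) x :=
  (hasDerivAt_erf x).const_sub 1

lemma differentiable_erf : Differentiable ℝ erf := fun x => (hasDerivAt_erf x).differentiableAt

@[fun_prop]
lemma continuous_erf : Continuous erf := differentiable_erf.continuous

@[fun_prop]
lemma continuous_erfc : Continuous erfc := continuous_const.sub continuous_erf

lemma monotone_erf : Monotone erf :=
  monotone_of_deriv_nonneg differentiable_erf fun x => by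
    rw [(hasDerivAt_erf x).deriv]; positivity

lemma erf_zero : erf 0 = 0 := by simp [erf]

lemma erf_nonneg {x : ℝ} (hx : 0 ≤ x) : 0 ≤ erf x := erf_zero ▸ monotone_erf hx

lemma erfc_eq_integral_Ioi (x : ℝ) : erfc x = 2 / √π * ∫ u in Ioi x, exp (-u ^ 2) := by
  have hsplit := intervalIntegral.integral_interval_add_Ioi (a := 0) (b := x) (μ := volume)
    integrable_exp_neg_sq.integrableOn integrable_exp_neg_sq.integrableOn
  have hgauss : ∫ u in Ioi (0 : ℝ), exp (-u ^ 2) = √π / 2 := by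
    simpa using integral_gaussian_Ioi 1
  have : √π ≠ 0 := by positivity
  rw [erfc, erf, ← sub_eq_of_eq_add' (hsplit.trans hgauss).symm]
  field_simp

lemma erfc_pos (x : ℝ) : 0 < erfc x := by
  have : NeZero (volume.restrict (Ioi x)) := ⟨by simp⟩
  rw [erfc_eq_integral_Ioi]
  exact mul_pos (by positivity) (integral_exp_pos integrable_exp_neg_sq.integrableOn)

lemma integral_Ioi_mul_exp_neg_sq (x : ℝ) : ∫ u in Ioi x, u * exp (-u ^ 2) = exp (-x ^ 2) / 2 := by
  have hderiv (u : ℝ) : HasDerivAt (fun u : ℝ => -exp (-u ^ 2) / 2) (u * exp (-u ^ 2)) u := by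
    refine (((hasDerivAt_pow 2 u).fun_neg.exp).fun_neg.div_const 2).congr_deriv ?_
    push_cast
    ring
  have hlim : Tendsto (fun u : ℝ => -exp (-u ^ 2) / 2) atTop (𝓝 0) := by
    simpa using ((tendsto_exp_atBot.comp (tendsto_neg_atTop_atBot.comp
      (tendsto_pow_atTop two_ne_zero))).neg).div_const 2
  rw [integral_Ioi_of_hasDerivAt_of_tendsto' (fun u _ => hderiv u)
    (by simpa using (integrable_mul_exp_neg_mul_sq one_pos).integrableOn) hlim]
  ring

lemma two_mul_mul_erfc_le (x : ℝ) : 2 * x * erfc x ≤ 2 / √π * exp (-x ^ 2) := by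
  rcases le_or_gt x 0 with hx | hx
  · have := erfc_pos x
    have : 0 < 2 / √π * exp (-x ^ 2) := by positivity
    nlinarith
  have hint : x * ∫ u in Ioi x, exp (-u ^ 2) ≤ exp (-x ^ 2) / 2 := by
    rw [← integral_Ioi_mul_exp_neg_sq, ← integral_const_mul]
    refine setIntegral_mono_on (integrable_exp_neg_sq.integrableOn.const_mul x)
      (by simpa using (integrable_mul_exp_neg_mul_sq one_pos).integrableOn) measurableSet_Ioi
      fun u hu => ?_
    exact mul_le_mul_of_nonneg_right (le_of_lt hu) (exp_pos _).le
  rw [erfc_eq_integral_Ioi]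
  have : 0 ≤ 2 / √π := by positivity
  nlinarith

lemma monotone_exp_neg_sq_div_erfc : Monotone fun x => exp (-x ^ 2) / erfc x := by
  have hderiv (x : ℝ) : HasDerivAt (fun x => exp (-x ^ 2) / erfc x)
      (exp (-x ^ 2) * (2 / √π * exp (-x ^ 2) - 2 * x * erfc x) / erfc x ^ 2) x := by
    refine ((hasDerivAt_pow 2 x).fun_neg.exp.div (hasDerivAt_erfc x) (erfc_pos x).ne').congr_deriv ?_
    push_cast
    ring
  refine monotone_of_deriv_nonneg (fun x => (hderiv x).differentiableAt) fun x => ?_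
  rw [(hderiv x).deriv]
  have := two_mul_mul_erfc_le x
  exact div_nonneg (mul_nonneg (exp_pos _).le (by linarith)) (sq_nonneg _)

lemma one_add_mul_erf_pos {c x : ℝ} (hc : 0 ≤ c) (hx : 0 ≤ x) : 0 < 1 + c * erf x := by
  have := mul_nonneg hc (erf_nonneg hx)
  linarith

lemma antitoneOn_exp_neg_mul_sq_div_one_add_mul_erf {a c : ℝ} (ha : 0 ≤ a) (hc : 0 ≤ c) :
    AntitoneOn (fun x => exp (-(a * x ^ 2)) / (1 + c * erf (√a * x))) (Ici 0) := by
  intro x hx y hy hxy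
  refine div_le_div₀ (exp_pos _).le ?_ (one_add_mul_erf_pos hc (mul_nonneg (sqrt_nonneg a) hx)) ?_
  · gcongr
  · gcongr
    exact monotone_erf (by gcongr)

lemma continuousOn_exp_neg_mul_sq_div_one_add_mul_erf {a c : ℝ} (hc : 0 ≤ c) :
    ContinuousOn (fun x => exp (-(a * x ^ 2)) / (1 + c * erf (√a * x))) (Ici 0) :=
  (Continuous.continuousOn (by fun_prop)).div (Continuous.continuousOn (by fun_prop))
    fun x hx => (one_add_mul_erf_pos hc (mul_nonneg (sqrt_nonneg a) hx)).ne'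

theorem existsUnique_pos_fixedPoint_of_antitoneOn {f : ℝ → ℝ} (hcont : ContinuousOn f (Ici 0))
    (hanti : AntitoneOn f (Ici 0)) (h0 : 0 < f 0) : ∃! x, 0 < x ∧ f x = x := by
  obtain ⟨x, hx, hfx⟩ : ∃ x ∈ Icc 0 (f 0), f x - x = 0 :=
    intermediate_value_Icc' h0.le ((hcont.mono Icc_subset_Ici_self).sub continuousOn_id)
      ⟨sub_nonpos.2 (hanti self_mem_Ici h0.le h0.le), by simpa using h0.le⟩
  have hx0 : x ≠ 0 := by
    rintro rfl
    simp [h0.ne'] at hfx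
  refine ⟨x, ⟨lt_of_le_of_ne hx.1 (Ne.symm hx0), sub_eq_zero.1 hfx⟩, fun y ⟨hy, hfy⟩ => ?_⟩
  have hfix {p q : ℝ} (hp : 0 ≤ p) (hq : 0 ≤ q) (hfp : f p = p) (hfq : f q = q) (hpq : p ≤ q) :
      q ≤ p := hfq ▸ hfp ▸ hanti hp hq hpq
  rcases le_total x y with hxy | hyx
  · exact le_antisymm (hfix hx.1 hy.le (sub_eq_zero.1 hfx) hfy hxy) hxy
  · exact le_antisymm hyx (hfix hy.le hx.1 hfy (sub_eq_zero.1 hfx) hyx)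

theorem F_unique_fixed_point (b b1 b2 b3 : ℝ) (hb : 0 < b) (hb2 : 0 < b2) (hb3 : 0 < b3)
    (hb1 : b3 < b1) :
    ∃! x : ℝ, 0 < x ∧
      b1 * Real.exp (-(b * x^2)) / (1 + b2 * erf (Real.sqrt b * x))
        - b3 * (Real.exp (-x^2) / erfc x) = x := by
  have hb1pos : 0 < b1 := hb3.trans hb1
  simp only [mul_div_assoc]
  apply existsUnique_pos_fixedPoint_of_antitoneOn
  · exact ((continuousOn_exp_neg_mul_sq_div_one_add_mul_erf hb2.le).const_smul b1).sub
      (Continuous.continuousOn (by fun_prop (disch := exact fun x => (erfc_pos x).ne')))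
  · intro x hx y hy hxy
    have h1 := antitoneOn_exp_neg_mul_sq_div_one_add_mul_erf hb.le hb2.le hx hy hxy
    have h2 := monotone_exp_neg_sq_div_erfc hxy
    dsimp only
    gcongr
  · simpa [erf_zero, erfc] using hb1
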